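/- Let κ be an even integer with 0 ≤ κ < n, and for p ∈ {e, o} and each subset s ⊆ {1,…,2n} with |s| = κ define B_{κ,s}^p := (i^{⌊κ/2⌋} / sqrt(2 · 2^n)) · (c^s + (−1)^{λ_p} P c^s), where λ_e = 0 and λ_o = 1 and P = Z^{⊗n}. Then: (i) these operators are orthonormal, Tr((B_{κ,s}^p)† B_{κ,s′}^{p′}) = δ_{s s′} δ_{p p′}; (ii) they have definite parity, P B_{κ,s}^e = B_{κ,s}^e P = B_{κ,s}^e and P B_{κ,s}^o = B_{κ,s}^o P = −B_{κ,s}^o; and (iii) writing B_κ^e and B_κ^o for the complex spans of {B_{κ,s}^e} and {B_{κ,s}^o} respectively, one has the direct-sum decomposition B_κ ⊕ B_{2n−κ} = B_κ^e ⊕ B_κ^o. -/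

import Mathlib

open Matrix Complex
open scoped Kronecker

noncomputable section

abbrev QIdx (n : ℕ) := Fin n → Fin 2
abbrev NMat (n : ℕ) := Matrix (QIdx n) (QIdx n) ℂ
abbrev NMat2 (n : ℕ) := Matrix (QIdx n × QIdx n) (QIdx n × QIdx n) ℂ

/-- The 2×2 Pauli X matrix. -/
def σX : Matrix (Fin 2) (Fin 2) ℂ := !![0, 1; 1, 0]
/-- The 2×2 Pauli Y matrix. -/
def σY : Matrix (Fin 2) (Fin 2) ℂ := !![0, -Complex.I; Complex.I, 0]
/-- The 2×2 Pauli Z matrix. -/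
def σZ : Matrix (Fin 2) (Fin 2) ℂ := !![1, 0; 0, -1]

/-- Tensor (Kronecker) product of `n` one-qubit matrices, realized on index type `Fin n → Fin 2`. -/
def tensor {n : ℕ} (M : Fin n → Matrix (Fin 2) (Fin 2) ℂ) : NMat n :=
  Matrix.of fun f g => ∏ i, M i (f i) (g i)

/-- The Jordan–Wigner Majorana operator `c_μ` (0-based index: `c_{2i} = Z^{⊗i} X I…`,
`c_{2i+1} = Z^{⊗i} Y I…`). -/
def majorana (n : ℕ) (μ : Fin (2 * n)) : NMat n :=
  tensor fun j =>
    if (j : ℕ) < (μ : ℕ) / 2 then σZ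
    else if (j : ℕ) = (μ : ℕ) / 2 then (if (μ : ℕ) % 2 = 0 then σX else σY)
    else 1

/-- Ordered product `c^s` of the Majorana operators indexed by a subset `s`. -/
def cProd (n : ℕ) (s : Finset (Fin (2 * n))) : NMat n :=
  ((s.sort (· ≤ ·)).map (majorana n)).prod

/-- The module `B_κ`: the complex span of products of `κ` distinct Majoranas. -/
def Bspace (n κ : ℕ) : Submodule ℂ (NMat n) :=
  Submodule.span ℂ {M | ∃ s : Finset (Fin (2 * n)), s.card = κ ∧ M = cProd n s}

/-- The Pauli string with `Z` on qubit `j` and identity elsewhere. -/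
def pauliZ (n : ℕ) (j : Fin n) : NMat n := tensor fun k => if k = j then σZ else 1

/-- The Pauli string with `X` on qubits `j` and `j+1` and identity elsewhere. -/
def pauliXX (n : ℕ) (j : Fin n) : NMat n :=
  tensor fun k => if (k : ℕ) = (j : ℕ) ∨ (k : ℕ) = (j : ℕ) + 1 then σX else 1

/-- The parity operator `P = Z^{⊗n}`. -/
def parity (n : ℕ) : NMat n := tensor fun _ => σZ


/-- The definite-parity basis element
`B_{κ,s}^λ = (i^{⌊κ/2⌋}/√(2·2^n)) (c^s + (−1)^λ P c^s)` (with `κ = |s|`). -/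
def Bp (n : ℕ) (lam : ℕ) (s : Finset (Fin (2 * n))) : NMat n :=
  ((Complex.I) ^ (s.card / 2) / ((Real.sqrt (2 * 2 ^ n) : ℝ) : ℂ)) •
    (cProd n s + ((-1 : ℂ)) ^ lam • (parity n * cProd n s))

/-- The span of the definite-parity basis elements `B_{κ,s}^λ` over `|s| = κ`. -/
def BparSpace (n κ lam : ℕ) : Submodule ℂ (NMat n) :=
  Submodule.span ℂ {M | ∃ s : Finset (Fin (2 * n)), s.card = κ ∧ M = Bp n lam s}

/-!
Each Majorana product `c^s` is a nonzero multiple of a Pauli string `⊗ⱼ X^{a j} Z^{b j}`, whose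
labels `(a, b)` determine `s`, and `P c^s` is a multiple of `c^{sᶜ}`. Distinct Pauli strings are
trace-orthogonal and the `c^s` are unitary, so `tr((c^s)† c^{s'}) = 2^n δ_{s s'}`, while
`tr((c^s)† P c^{s'}) = 0` unless `s = s'ᶜ`, which `|s| + |s'| = 2κ < 2n` rules out. Writing
`B_{κ,s}^λ` as a scalar times `(1 + (-1)^λ P) c^s`, orthonormality follows from
`(1 ± P)² = 2 (1 ± P)` and `(1 + P)(1 - P) = 0`. `P` anticommutes with every Majorana, hence
commutes with `c^s` for even `|s|`, which gives the parities. Finally `B_{2n-κ}` is spanned by the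
`P c^s` with `|s| = κ`, so `B_κ ⊕ B_{2n-κ}` is spanned by the `c^s ± P c^s`, and the two spans
meet trivially because they lie in distinct eigenspaces of left multiplication by `P`.
-/

open scoped symmDiff

section Tensor

variable {n : ℕ}

lemma tensor_mul (M N : Fin n → Matrix (Fin 2) (Fin 2) ℂ) :
    tensor M * tensor N = tensor fun i => M i * N i := by
  ext f g
  simp only [tensor, Matrix.mul_apply, Matrix.of_apply, Finset.prod_univ_sum,
    Fintype.piFinset_univ, Finset.prod_mul_distrib]

lemma tensor_one : tensor (fun _ : Fin n => (1 : Matrix (Fin 2) (Fin 2) ℂ)) = 1 := by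
  ext f g
  by_cases h : f = g
  · simp [tensor, h, Matrix.one_apply]
  · obtain ⟨i, hi⟩ := Function.ne_iff.mp h
    simp only [tensor, Matrix.of_apply, Matrix.one_apply_ne h]
    exact Finset.prod_eq_zero (Finset.mem_univ i) (Matrix.one_apply_ne hi)

lemma conjTranspose_tensor (M : Fin n → Matrix (Fin 2) (Fin 2) ℂ) :
    (tensor M)ᴴ = tensor fun i => (M i)ᴴ := by
  ext f g
  simp only [tensor, Matrix.conjTranspose_apply, Matrix.of_apply, star_prod]

lemma tensor_smul (c : Fin n → ℂ) (M : Fin n → Matrix (Fin 2) (Fin 2) ℂ) :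
    (tensor fun i => c i • M i) = (∏ i, c i) • tensor M := by
  ext f g
  simp [tensor, Finset.prod_mul_distrib]

lemma trace_tensor (M : Fin n → Matrix (Fin 2) (Fin 2) ℂ) :
    (tensor M).trace = ∏ i, (M i).trace := by
  simp only [Matrix.trace, Matrix.diag, tensor, Matrix.of_apply, Finset.prod_univ_sum,
    Fintype.piFinset_univ]

lemma tensor_mem_unitary {M : Fin n → Matrix (Fin 2) (Fin 2) ℂ}
    (hM : ∀ i, M i ∈ unitary (Matrix (Fin 2) (Fin 2) ℂ)) :
    tensor M ∈ unitary (NMat n) := by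
  simp only [Unitary.mem_iff, Matrix.star_eq_conjTranspose, conjTranspose_tensor, tensor_mul,
    ← tensor_one]
  constructor <;> congr 1 <;> ext1 i
  · exact Unitary.star_mul_self_of_mem (hM i)
  · exact Unitary.mul_star_self_of_mem (hM i)

lemma tensor_mul_tensor_eq_neg {M N : Fin n → Matrix (Fin 2) (Fin 2) ℂ} (i₀ : Fin n)
    (hcomm : ∀ i ≠ i₀, M i * N i = N i * M i) (hanti : M i₀ * N i₀ = -(N i₀ * M i₀)) :
    tensor M * tensor N = -(tensor N * tensor M) := by
  rw [tensor_mul, tensor_mul]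
  ext f g
  simp only [tensor, Matrix.of_apply, Matrix.neg_apply,
    ← Finset.mul_prod_erase _ _ (Finset.mem_univ i₀), hanti]
  rw [Finset.prod_congr rfl fun i hi => by rw [hcomm i (Finset.ne_of_mem_erase hi)]]
  simp

end Tensor

lemma σX_mem_unitary : σX ∈ unitary (Matrix (Fin 2) (Fin 2) ℂ) := by
  rw [Matrix.mem_unitaryGroup_iff, Matrix.star_eq_conjTranspose]
  ext i j; fin_cases i <;> fin_cases j <;> simp [σX, Matrix.mul_apply, Fin.sum_univ_two]

lemma σY_mem_unitary : σY ∈ unitary (Matrix (Fin 2) (Fin 2) ℂ) := by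
  rw [Matrix.mem_unitaryGroup_iff, Matrix.star_eq_conjTranspose]
  ext i j; fin_cases i <;> fin_cases j <;> simp [σY, Matrix.mul_apply, Fin.sum_univ_two]

lemma σZ_mem_unitary : σZ ∈ unitary (Matrix (Fin 2) (Fin 2) ℂ) := by
  rw [Matrix.mem_unitaryGroup_iff, Matrix.star_eq_conjTranspose]
  ext i j; fin_cases i <;> fin_cases j <;> simp [σZ, Matrix.mul_apply, Fin.sum_univ_two]

lemma conjTranspose_σZ : σZᴴ = σZ := by
  ext i j; fin_cases i <;> fin_cases j <;> simp [σZ]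

lemma σZ_mul_σZ : σZ * σZ = 1 := by
  simp [σZ, Matrix.one_fin_two]

lemma σZ_mul_σX : σZ * σX = -(σX * σZ) := by
  simp [σZ, σX]

lemma σZ_mul_σY : σZ * σY = -(σY * σZ) := by
  simp [σZ, σY]

def pauli (x z : ZMod 2) : Matrix (Fin 2) (Fin 2) ℂ := σX ^ x.val * σZ ^ z.val

lemma ZMod.two_cases (x : ZMod 2) : x = 0 ∨ x = 1 := by revert x; decide

lemma pauli_mul_pauli (x z x' z' : ZMod 2) :
    pauli x z * pauli x' z' = (-1 : ℂ) ^ (z.val * x'.val) • pauli (x + x') (z + z') := by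
  have h2 : (1 + 1 : ZMod 2) = 0 := rfl
  rcases x.two_cases with rfl | rfl <;> rcases z.two_cases with rfl | rfl <;>
    rcases x'.two_cases with rfl | rfl <;> rcases z'.two_cases with rfl | rfl <;>
    ext i j <;> fin_cases i <;> fin_cases j <;>
    simp [pauli, σX, σZ, Matrix.mul_apply, h2, ZMod.val_one]

lemma conjTranspose_pauli (x z : ZMod 2) :
    (pauli x z)ᴴ = (-1 : ℂ) ^ (x.val * z.val) • pauli x z := by
  rcases x.two_cases with rfl | rfl <;> rcases z.two_cases with rfl | rfl <;>
    ext i j <;> fin_cases i <;> fin_cases j <;> simp [pauli, σX, σZ, ZMod.val_one]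

lemma trace_pauli_eq_zero {x z : ZMod 2} (h : x ≠ 0 ∨ z ≠ 0) : (pauli x z).trace = 0 := by
  rcases x.two_cases with rfl | rfl <;> rcases z.two_cases with rfl | rfl <;>
    simp_all [pauli, σX, σZ, Matrix.trace_fin_two, ZMod.val_one]

lemma pauli_zero_zero : pauli 0 0 = 1 := by simp [pauli]
lemma pauli_zero_one : pauli 0 1 = σZ := by simp [pauli, ZMod.val_one]
lemma pauli_one_zero : pauli 1 0 = σX := by simp [pauli, ZMod.val_one]
lemma I_smul_pauli_one_one : Complex.I • pauli 1 1 = σY := by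
  ext i j; fin_cases i <;> fin_cases j <;> simp [pauli, σX, σY, σZ, ZMod.val_one]

section PauliString

variable {n : ℕ}

def pauliString (a b : Fin n → ZMod 2) : NMat n := tensor fun j => pauli (a j) (b j)

def IsPauliMultiple (M : NMat n) (a b : Fin n → ZMod 2) : Prop :=
  ∃ c : ℂ, c ≠ 0 ∧ M = c • pauliString a b

lemma isPauliMultiple_tensor {M : Fin n → Matrix (Fin 2) (Fin 2) ℂ} {a b : Fin n → ZMod 2}
    (hM : ∀ j, ∃ c : ℂ, c ≠ 0 ∧ M j = c • pauli (a j) (b j)) :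
    IsPauliMultiple (tensor M) a b := by
  choose c hc hMc using hM
  refine ⟨∏ j, c j, Finset.prod_ne_zero_iff.mpr fun j _ => hc j, ?_⟩
  rw [pauliString, ← tensor_smul]
  exact congrArg tensor (funext hMc)

lemma IsPauliMultiple.mul {M N : NMat n} {a b a' b' : Fin n → ZMod 2}
    (hM : IsPauliMultiple M a b) (hN : IsPauliMultiple N a' b') :
    IsPauliMultiple (M * N) (a + a') (b + b') := by
  obtain ⟨c, hc, rfl⟩ := hM
  obtain ⟨d, hd, rfl⟩ := hN
  have hW : pauliString a b * pauliString a' b' =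
      (∏ j, (-1 : ℂ) ^ ((b j).val * (a' j).val)) • pauliString (a + a') (b + b') := by
    simp only [pauliString, tensor_mul, pauli_mul_pauli, tensor_smul, Pi.add_apply]
  refine ⟨c * d * ∏ j, (-1 : ℂ) ^ ((b j).val * (a' j).val),
    by simp [hc, hd, Finset.prod_eq_zero_iff], ?_⟩
  rw [Matrix.smul_mul, Matrix.mul_smul, hW, smul_smul, smul_smul, mul_assoc]

lemma IsPauliMultiple.conjTranspose {M : NMat n} {a b : Fin n → ZMod 2}
    (hM : IsPauliMultiple M a b) : IsPauliMultiple Mᴴ a b := by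
  obtain ⟨c, hc, rfl⟩ := hM
  refine ⟨star c * ∏ j, (-1 : ℂ) ^ ((a j).val * (b j).val),
    by simp [hc, Finset.prod_eq_zero_iff], ?_⟩
  simp only [Matrix.conjTranspose_smul, pauliString, conjTranspose_tensor, conjTranspose_pauli,
    tensor_smul, smul_smul]

lemma IsPauliMultiple.trace_eq_zero {M : NMat n} {a b : Fin n → ZMod 2}
    (hM : IsPauliMultiple M a b) (hab : a ≠ 0 ∨ b ≠ 0) : M.trace = 0 := by
  obtain ⟨c, -, rfl⟩ := hM
  obtain ⟨j, hj⟩ : ∃ j, a j ≠ 0 ∨ b j ≠ 0 := by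
    simpa only [Function.ne_iff, Pi.zero_apply, ← exists_or] using hab
  rw [Matrix.trace_smul, pauliString, trace_tensor,
    Finset.prod_eq_zero (Finset.mem_univ j) (trace_pauli_eq_zero hj), smul_zero]

lemma IsPauliMultiple.trace_conjTranspose_mul_eq_zero {M N : NMat n}
    {a b a' b' : Fin n → ZMod 2} (hM : IsPauliMultiple M a b) (hN : IsPauliMultiple N a' b')
    (hne : a ≠ a' ∨ b ≠ b') :
    (Mᴴ * N).trace = 0 := by
  refine (hM.conjTranspose.mul hN).trace_eq_zero ?_
  have hzero (x y : Fin n → ZMod 2) : x + y = 0 ↔ x = y := by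
    rw [add_eq_zero_iff_eq_neg, ZModModule.neg_eq_self]
  simpa only [Ne, hzero] using hne

lemma IsPauliMultiple.exists_eq_smul {M N : NMat n} {a b : Fin n → ZMod 2}
    (hM : IsPauliMultiple M a b) (hN : IsPauliMultiple N a b) :
    ∃ d : ℂ, d ≠ 0 ∧ M = d • N := by
  obtain ⟨c, hc, rfl⟩ := hM
  obtain ⟨e, he, rfl⟩ := hN
  exact ⟨c / e, div_ne_zero hc he, by rw [smul_smul, div_mul_cancel₀ _ he]⟩

end PauliString

section Majorana

variable {n : ℕ}

/-- `c_μ` is, up to a phase, the Pauli string with an `X` on qubit `μ / 2` and a `Z` on the qubits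
`j` with `2 j < μ`: those before `μ / 2`, and `μ / 2` itself when `μ` is odd, as `Y = i X Z`. -/
def majoranaXLabel (μ : Fin (2 * n)) : Fin n → ZMod 2 :=
  fun j => if (j : ℕ) = μ / 2 then 1 else 0

def majoranaZLabel (μ : Fin (2 * n)) : Fin n → ZMod 2 :=
  fun j => if 2 * (j : ℕ) < μ then 1 else 0

lemma isPauliMultiple_majorana (μ : Fin (2 * n)) :
    IsPauliMultiple (majorana n μ) (majoranaXLabel μ) (majoranaZLabel μ) := by
  refine isPauliMultiple_tensor fun j => ?_
  simp only [majoranaXLabel, majoranaZLabel]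
  rcases lt_trichotomy (j : ℕ) (μ / 2) with hlt | heq | hgt
  · have h2 : 2 * (j : ℕ) < μ := by omega
    exact ⟨1, one_ne_zero, by simp [hlt, h2, hlt.ne, pauli_zero_one]⟩
  · rcases Nat.mod_two_eq_zero_or_one μ with hμ | hμ
    · have h2 : ¬ 2 * ((μ : ℕ) / 2) < μ := by omega
      exact ⟨1, one_ne_zero, by simp [heq, hμ, h2, pauli_one_zero]⟩
    · have h2 : 2 * ((μ : ℕ) / 2) < μ := by omega
      exact ⟨Complex.I, Complex.I_ne_zero, by simp [heq, hμ, h2, I_smul_pauli_one_one]⟩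
  · have h2 : ¬ 2 * (j : ℕ) < μ := by omega
    exact ⟨1, one_ne_zero, by simp [hgt.ne', not_lt.mpr hgt.le, h2, pauli_zero_zero]⟩

lemma majorana_mem_unitary (μ : Fin (2 * n)) : majorana n μ ∈ unitary (NMat n) :=
  tensor_mem_unitary fun j => by
    split_ifs
    exacts [σZ_mem_unitary, σX_mem_unitary, σY_mem_unitary, one_mem _]

lemma parity_mul_majorana (μ : Fin (2 * n)) :
    parity n * majorana n μ = -(majorana n μ * parity n) := by
  refine tensor_mul_tensor_eq_neg ⟨μ / 2, by omega⟩ (fun j hj => ?_) ?_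
  · split_ifs <;> simp_all [Fin.ext_iff]
  · simp only [lt_irrefl, if_false, if_true]
    split_ifs
    exacts [σZ_mul_σX, σZ_mul_σY]

end Majorana

lemma Finset.sum_symmDiff_of_zmod_two {α M : Type*} [DecidableEq α] [AddCommGroup M]
    [Module (ZMod 2) M] (s t : Finset α) (f : α → M) :
    ∑ x ∈ s ∆ t, f x = ∑ x ∈ s, f x + ∑ x ∈ t, f x := by
  rw [← Finset.sum_union_inter,
    ← Finset.sum_sdiff (Finset.inter_subset_union (s := s) (t := t)),
    add_assoc, ZModModule.add_self, add_zero, symmDiff_eq_sup_sdiff_inf]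
  rfl

section CProd

variable {n : ℕ}

def xLabel (s : Finset (Fin (2 * n))) : Fin n → ZMod 2 := ∑ μ ∈ s, majoranaXLabel μ

def zLabel (s : Finset (Fin (2 * n))) : Fin n → ZMod 2 := ∑ μ ∈ s, majoranaZLabel μ

lemma isPauliMultiple_list_prod_majorana (l : List (Fin (2 * n))) :
    IsPauliMultiple (l.map (majorana n)).prod (l.map majoranaXLabel).sum
      (l.map majoranaZLabel).sum := by
  induction l with
  | nil => exact ⟨1, one_ne_zero, by simp [pauliString, pauli_zero_zero, tensor_one]⟩
  | cons μ l ih => simpa using (isPauliMultiple_majorana μ).mul ih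

lemma isPauliMultiple_cProd (s : Finset (Fin (2 * n))) :
    IsPauliMultiple (cProd n s) (xLabel s) (zLabel s) := by
  have hsort := s.sort_nodup (· ≤ ·)
  have h := isPauliMultiple_list_prod_majorana (s.sort (· ≤ ·))
  rwa [← List.sum_toFinset _ hsort, ← List.sum_toFinset _ hsort, Finset.sort_toFinset] at h

lemma conjTranspose_cProd_mul_self (s : Finset (Fin (2 * n))) : (cProd n s)ᴴ * cProd n s = 1 :=
  Unitary.star_mul_self_of_mem <| list_prod_mem <| by
    simpa only [List.forall_mem_map] using fun μ _ => majorana_mem_unitary μ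

lemma parity_mul_list_prod_majorana (l : List (Fin (2 * n))) :
    parity n * (l.map (majorana n)).prod =
      (-1 : ℂ) ^ l.length • ((l.map (majorana n)).prod * parity n) := by
  induction l with
  | nil => simp
  | cons μ l ih =>
    rw [List.map_cons, List.prod_cons, ← mul_assoc, parity_mul_majorana, neg_mul, mul_assoc, ih,
      Matrix.mul_smul, ← mul_assoc, List.length_cons, pow_succ, mul_neg_one, neg_smul]

lemma parity_mul_cProd_of_even {s : Finset (Fin (2 * n))} (hs : Even s.card) :
    parity n * cProd n s = cProd n s * parity n := by
  rw [cProd, parity_mul_list_prod_majorana, Finset.length_sort, hs.neg_one_pow, one_smul]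

lemma eq_empty_of_xLabel_eq_zero_of_zLabel_eq_zero {t : Finset (Fin (2 * n))}
    (hx : xLabel t = 0) (hz : zLabel t = 0) : t = ∅ := by
  by_contra hne
  have ht : t.Nonempty := Finset.nonempty_iff_ne_empty.mpr hne
  obtain ⟨m, hm, hmax⟩ : ∃ m ∈ t, ∀ μ ∈ t, μ ≤ m :=
    ⟨_, t.max'_mem ht, fun μ hμ => t.le_max' μ hμ⟩
  have hmax' : ∀ μ ∈ t, μ ≠ m → (μ : ℕ) < m := fun μ hμ hμm =>
    Fin.lt_def.mp (lt_of_le_of_ne (hmax μ hμ) hμm)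
  -- The largest element `m` of `t` is the only one contributing to the `X`-label at qubit `m / 2`
  -- when `m` is even, and to the `Z`-label there when `m` is odd.
  let j : Fin n := ⟨m / 2, by omega⟩
  apply one_ne_zero (α := ZMod 2)
  rcases Nat.mod_two_eq_zero_or_one m with hm2 | hm2
  · calc (1 : ZMod 2) = xLabel t j := by
          rw [xLabel, Finset.sum_apply, Finset.sum_eq_single_of_mem m hm]
          · simp [majoranaXLabel, j]
          · intro μ hμ hμm
            have := hmax' μ hμ hμm
            simp only [majoranaXLabel, j, ite_eq_right_iff]
            omega
      _ = 0 := by rw [hx]; rfl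
  · calc (1 : ZMod 2) = zLabel t j := by
          rw [zLabel, Finset.sum_apply, Finset.sum_eq_single_of_mem m hm]
          · simp [majoranaZLabel, j]
            omega
          · intro μ hμ hμm
            have := hmax' μ hμ hμm
            simp only [majoranaZLabel, j, ite_eq_right_iff]
            omega
      _ = 0 := by rw [hz]; rfl

lemma eq_of_xLabel_eq_of_zLabel_eq {s t : Finset (Fin (2 * n))}
    (hx : xLabel s = xLabel t) (hz : zLabel s = zLabel t) : s = t := by
  refine symmDiff_eq_bot.mp (eq_empty_of_xLabel_eq_zero_of_zLabel_eq_zero ?_ ?_)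
  · rw [xLabel, Finset.sum_symmDiff_of_zmod_two, ← xLabel, ← xLabel, hx, ZModModule.add_self]
  · rw [zLabel, Finset.sum_symmDiff_of_zmod_two, ← zLabel, ← zLabel, hz, ZModModule.add_self]

lemma xLabel_univ : xLabel (Finset.univ : Finset (Fin (2 * n))) = 0 := by
  ext j
  have hfilter : Finset.univ.filter (fun μ : Fin (2 * n) => (j : ℕ) = μ / 2) =
      {⟨2 * j, by omega⟩, ⟨2 * j + 1, by omega⟩} := by
    ext μ
    simp only [Finset.mem_filter, Finset.mem_univ, true_and, Finset.mem_insert,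
      Finset.mem_singleton, Fin.ext_iff]
    omega
  simp only [xLabel, majoranaXLabel, Finset.sum_apply, Finset.sum_boole, hfilter, Pi.zero_apply]
  rw [Finset.card_pair (by simp [Fin.ext_iff])]
  rfl

lemma zLabel_univ : zLabel (Finset.univ : Finset (Fin (2 * n))) = 1 := by
  ext j
  have hfilter : Finset.univ.filter (fun μ : Fin (2 * n) => 2 * (j : ℕ) < μ) =
      Finset.Ioi ⟨2 * j, by omega⟩ := by
    ext μ
    simp [Fin.lt_def]
  have hcard : 2 * n - 1 - 2 * (j : ℕ) = 2 * (n - 1 - j) + 1 := by omega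
  simp only [zLabel, majoranaZLabel, Finset.sum_apply, Finset.sum_boole, hfilter, Fin.card_Ioi,
    Pi.one_apply, hcard]
  rw [Nat.cast_succ, Nat.cast_mul, ZMod.natCast_self, zero_mul, zero_add]

lemma xLabel_compl (s : Finset (Fin (2 * n))) : xLabel sᶜ = xLabel s := by
  have h : xLabel s + xLabel sᶜ = 0 := by
    rw [xLabel, xLabel, Finset.sum_add_sum_compl, ← xLabel, xLabel_univ]
  rwa [add_eq_zero_iff_eq_neg, ZModModule.neg_eq_self, eq_comm] at h

lemma zLabel_compl (s : Finset (Fin (2 * n))) : zLabel sᶜ = zLabel s + 1 := by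
  have h : zLabel s + zLabel sᶜ = 1 := by
    rw [zLabel, zLabel, Finset.sum_add_sum_compl, ← zLabel, zLabel_univ]
  rw [← h, ← add_assoc, ZModModule.add_self, zero_add]

lemma isPauliMultiple_parity : IsPauliMultiple (parity n) 0 1 :=
  ⟨1, one_ne_zero, by simp [pauliString, parity, pauli_zero_one]⟩

lemma isPauliMultiple_parity_mul_cProd (s : Finset (Fin (2 * n))) :
    IsPauliMultiple (parity n * cProd n s) (xLabel sᶜ) (zLabel sᶜ) := by
  rw [xLabel_compl, zLabel_compl, add_comm]
  simpa using isPauliMultiple_parity.mul (isPauliMultiple_cProd s)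

lemma exists_cProd_compl_eq_smul (s : Finset (Fin (2 * n))) :
    ∃ d : ℂ, d ≠ 0 ∧ cProd n sᶜ = d • (parity n * cProd n s) :=
  (isPauliMultiple_cProd sᶜ).exists_eq_smul (isPauliMultiple_parity_mul_cProd s)

lemma trace_conjTranspose_cProd_mul_cProd (s s' : Finset (Fin (2 * n))) :
    ((cProd n s)ᴴ * cProd n s').trace = if s = s' then 2 ^ n else 0 := by
  split_ifs with h
  · simp [h, conjTranspose_cProd_mul_self]
  · refine (isPauliMultiple_cProd s).trace_conjTranspose_mul_eq_zero
      (isPauliMultiple_cProd s') ?_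
    exact not_and_or.mp fun hxz => h (eq_of_xLabel_eq_of_zLabel_eq hxz.1 hxz.2)

lemma trace_conjTranspose_cProd_mul_parity_mul_cProd {s s' : Finset (Fin (2 * n))}
    (h : s ≠ s'ᶜ) : ((cProd n s)ᴴ * (parity n * cProd n s')).trace = 0 := by
  refine (isPauliMultiple_cProd s).trace_conjTranspose_mul_eq_zero
    (isPauliMultiple_parity_mul_cProd s') ?_
  exact not_and_or.mp fun hxz => h (eq_of_xLabel_eq_of_zLabel_eq hxz.1 hxz.2)

end CProd

section Parity

variable {n : ℕ}

lemma parity_mul_parity : parity n * parity n = 1 := by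
  rw [parity, tensor_mul, ← tensor_one]
  simp only [σZ_mul_σZ]

lemma conjTranspose_parity : (parity n)ᴴ = parity n := by
  rw [parity, conjTranspose_tensor, conjTranspose_σZ]

/-- `1 + (-1)^λ P` is twice the projection onto the `(-1)^λ`-eigenspace of `P`. -/
def parityFactor (n lam : ℕ) : NMat n := 1 + (-1 : ℂ) ^ lam • parity n

lemma neg_one_pow_mul_self {R : Type*} [Monoid R] [HasDistribNeg R] (k : ℕ) :
    (-1 : R) ^ k * (-1) ^ k = 1 := by
  rw [← pow_add, ← two_mul, pow_mul, neg_one_sq, one_pow]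

lemma conjTranspose_parityFactor (lam : ℕ) : (parityFactor n lam)ᴴ = parityFactor n lam := by
  simp [parityFactor, conjTranspose_parity]

lemma parity_mul_parityFactor (lam : ℕ) :
    parity n * parityFactor n lam = (-1 : ℂ) ^ lam • parityFactor n lam := by
  rw [parityFactor, mul_add, mul_one, Matrix.mul_smul, parity_mul_parity, smul_add, smul_smul,
    neg_one_pow_mul_self, one_smul, add_comm]

lemma parityFactor_mul_parity (lam : ℕ) :
    parityFactor n lam * parity n = (-1 : ℂ) ^ lam • parityFactor n lam := by
  rw [← parity_mul_parityFactor, parityFactor, mul_add, add_mul, mul_one, one_mul,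
    Matrix.mul_smul, Matrix.smul_mul]

lemma parityFactor_mul_self (lam : ℕ) :
    parityFactor n lam * parityFactor n lam = (2 : ℂ) • parityFactor n lam := by
  change parityFactor n lam * (1 + (-1 : ℂ) ^ lam • parity n) = _
  rw [mul_add, mul_one, Matrix.mul_smul, parityFactor_mul_parity, smul_smul, neg_one_pow_mul_self,
    one_smul, two_smul]

lemma parityFactor_mul_parityFactor_of_neg {lam lam' : ℕ} (h : (-1 : ℂ) ^ lam' = -(-1) ^ lam) :
    parityFactor n lam * parityFactor n lam' = 0 := by
  change parityFactor n lam * (1 + (-1 : ℂ) ^ lam' • parity n) = 0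
  rw [mul_add, mul_one, Matrix.mul_smul, parityFactor_mul_parity, smul_smul,
    h, neg_mul, neg_one_pow_mul_self, neg_one_smul, add_neg_cancel]

end Parity

section ParityBasis

variable {n : ℕ}

def bpScale (n κ : ℕ) : ℂ := Complex.I ^ (κ / 2) / ((Real.sqrt (2 * 2 ^ n) : ℝ) : ℂ)

lemma bpScale_ne_zero (n κ : ℕ) : bpScale n κ ≠ 0 :=
  div_ne_zero (pow_ne_zero _ Complex.I_ne_zero) (by simp)

lemma star_bpScale_mul_self (n κ : ℕ) :
    star (bpScale n κ) * bpScale n κ = (2 * 2 ^ n)⁻¹ := by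
  rw [Complex.star_def, ← Complex.normSq_eq_conj_mul_self]
  simp [bpScale, Complex.normSq_ofReal]

lemma Bp_eq_smul (lam : ℕ) (s : Finset (Fin (2 * n))) :
    Bp n lam s = bpScale n s.card • (parityFactor n lam * cProd n s) := by
  rw [Bp, bpScale, parityFactor, add_mul, one_mul, Matrix.smul_mul]

lemma parity_mul_Bp (lam : ℕ) (s : Finset (Fin (2 * n))) :
    parity n * Bp n lam s = (-1 : ℂ) ^ lam • Bp n lam s := by
  rw [Bp_eq_smul, Matrix.mul_smul, ← mul_assoc, parity_mul_parityFactor, Matrix.smul_mul,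
    smul_comm]

lemma Bp_mul_parity (lam : ℕ) {s : Finset (Fin (2 * n))} (hs : Even s.card) :
    Bp n lam s * parity n = (-1 : ℂ) ^ lam • Bp n lam s := by
  rw [Bp_eq_smul, Matrix.smul_mul, mul_assoc, ← parity_mul_cProd_of_even hs, ← mul_assoc,
    parityFactor_mul_parity, Matrix.smul_mul, smul_comm]

lemma conjTranspose_Bp_mul_Bp (lam lam' : ℕ) (s s' : Finset (Fin (2 * n))) :
    (Bp n lam s)ᴴ * Bp n lam' s' = (star (bpScale n s.card) * bpScale n s'.card) •
      ((cProd n s)ᴴ * (parityFactor n lam * parityFactor n lam') * cProd n s') := by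
  simp only [Bp_eq_smul, Matrix.conjTranspose_smul, Matrix.conjTranspose_mul,
    conjTranspose_parityFactor, Matrix.smul_mul, Matrix.mul_smul, smul_smul, mul_assoc]
  rw [mul_comm (bpScale n s'.card)]

lemma trace_conjTranspose_cProd_mul_parityFactor_mul_cProd (lam : ℕ)
    {s s' : Finset (Fin (2 * n))} (h : s ≠ s'ᶜ) :
    ((cProd n s)ᴴ * parityFactor n lam * cProd n s').trace = if s = s' then 2 ^ n else 0 := by
  rw [parityFactor, Matrix.mul_add, Matrix.add_mul, Matrix.mul_one, Matrix.mul_smul,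
    Matrix.smul_mul, Matrix.trace_add, Matrix.trace_smul, mul_assoc,
    trace_conjTranspose_cProd_mul_parity_mul_cProd h, trace_conjTranspose_cProd_mul_cProd,
    smul_zero, add_zero]

lemma trace_conjTranspose_Bp_mul_Bp (p p' : Fin 2) {s s' : Finset (Fin (2 * n))}
    (hcard : s.card + s'.card ≠ 2 * n) :
    ((Bp n p s)ᴴ * Bp n p' s').trace = if s = s' ∧ p = p' then 1 else 0 := by
  rw [conjTranspose_Bp_mul_Bp]
  by_cases hp : p = p'
  · subst hp
    have hcompl : s ≠ s'ᶜ := by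
      rintro rfl
      rw [Finset.card_compl, Fintype.card_fin,
        Nat.sub_add_cancel (by simpa using s'.card_le_univ)] at hcard
      exact hcard rfl
    rw [parityFactor_mul_self, Matrix.mul_smul, Matrix.smul_mul, Matrix.trace_smul,
      Matrix.trace_smul, trace_conjTranspose_cProd_mul_parityFactor_mul_cProd _ hcompl]
    by_cases h : s = s'
    · subst h
      rw [if_pos rfl, if_pos ⟨rfl, rfl⟩, smul_eq_mul, smul_eq_mul, star_bpScale_mul_self]
      field_simp
    · simp [h]
  · have hsign : (-1 : ℂ) ^ (p' : ℕ) = -(-1) ^ (p : ℕ) := by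
      fin_cases p <;> fin_cases p' <;> simp_all
    rw [parityFactor_mul_parityFactor_of_neg hsign, Matrix.mul_zero, Matrix.zero_mul, smul_zero,
      Matrix.trace_zero, if_neg (fun h => hp h.2)]

end ParityBasis

section Span

variable {K M ι : Type*} [Field K] [AddCommGroup M] [Module K M]

lemma Submodule.span_image_smul_of_ne_zero (S : Set ι) (u : ι → M) {c : ι → K}
    (hc : ∀ i ∈ S, c i ≠ 0) : span K ((fun i => c i • u i) '' S) = span K (u '' S) := by
  apply le_antisymm <;> rw [span_le] <;> rintro _ ⟨i, hi, rfl⟩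
  · exact smul_mem _ _ (subset_span ⟨i, hi, rfl⟩)
  · rw [← inv_smul_smul₀ (hc i hi) (u i)]
    exact smul_mem _ _ (subset_span ⟨i, hi, rfl⟩)

lemma Submodule.span_image_add_sup_span_image_sub (h2 : (2 : K) ≠ 0) (S : Set ι)
    (u v : ι → M) :
    span K ((fun i => u i + v i) '' S) ⊔ span K ((fun i => u i - v i) '' S) =
      span K (u '' S) ⊔ span K (v '' S) := by
  apply le_antisymm <;> refine sup_le ?_ ?_ <;> rw [span_le] <;> rintro _ ⟨i, hi, rfl⟩
  · exact add_mem (mem_sup_left (subset_span ⟨i, hi, rfl⟩))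
      (mem_sup_right (subset_span ⟨i, hi, rfl⟩))
  · exact sub_mem (mem_sup_left (subset_span ⟨i, hi, rfl⟩))
      (mem_sup_right (subset_span ⟨i, hi, rfl⟩))
  · have hu : u i = (2 : K)⁻¹ • ((u i + v i) + (u i - v i)) := by
      rw [add_add_sub_cancel, ← two_smul K, inv_smul_smul₀ h2]
    rw [hu]
    exact smul_mem _ _ (add_mem (mem_sup_left (subset_span ⟨i, hi, rfl⟩))
      (mem_sup_right (subset_span ⟨i, hi, rfl⟩)))
  · have hv : v i = (2 : K)⁻¹ • ((u i + v i) - (u i - v i)) := by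
      rw [add_sub_sub_cancel, ← two_smul K, inv_smul_smul₀ h2]
    rw [hv]
    exact smul_mem _ _ (sub_mem (mem_sup_left (subset_span ⟨i, hi, rfl⟩))
      (mem_sup_right (subset_span ⟨i, hi, rfl⟩)))

end Span

section Spaces

variable {n : ℕ}

lemma setOf_exists_eq_image {α β : Type*} (p : α → Prop) (f : α → β) :
    {b | ∃ a, p a ∧ b = f a} = f '' {a | p a} := by
  ext
  simp [eq_comm]

lemma Bspace_eq_span_image (κ : ℕ) :
    Bspace n κ = Submodule.span ℂ (cProd n '' {s | s.card = κ}) := by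
  rw [Bspace, setOf_exists_eq_image]

lemma Bspace_two_mul_sub_eq_span_image {κ : ℕ} (hκ : κ ≤ 2 * n) :
    Bspace n (2 * n - κ) =
      Submodule.span ℂ ((fun s => parity n * cProd n s) '' {s | s.card = κ}) := by
  choose d hd hcompl using exists_cProd_compl_eq_smul (n := n)
  have himage :
      {t : Finset (Fin (2 * n)) | t.card = 2 * n - κ} = (fun s => sᶜ) '' {s | s.card = κ} := by
    ext t
    simp only [Set.mem_ofPred_eq, Set.mem_image]
    constructor
    · refine fun ht => ⟨tᶜ, ?_, compl_compl t⟩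
      rw [Finset.card_compl, Fintype.card_fin, ht]
      omega
    · rintro ⟨s, hs, rfl⟩
      rw [Finset.card_compl, Fintype.card_fin, hs]
  rw [Bspace_eq_span_image, himage, Set.image_image, funext hcompl,
    Submodule.span_image_smul_of_ne_zero _ _ fun s _ => hd s]

lemma BparSpace_eq_span_image (κ lam : ℕ) :
    BparSpace n κ lam = Submodule.span ℂ
      ((fun s => cProd n s + (-1 : ℂ) ^ lam • (parity n * cProd n s)) ''
        {s | s.card = κ}) := by
  rw [BparSpace, setOf_exists_eq_image]
  exact Submodule.span_image_smul_of_ne_zero _ _ fun s _ => bpScale_ne_zero n s.card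

lemma BparSpace_le_eigenspace (κ lam : ℕ) :
    BparSpace n κ lam ≤
      Module.End.eigenspace (LinearMap.mulLeft ℂ (parity n)) ((-1 : ℂ) ^ lam) := by
  rw [BparSpace, Submodule.span_le]
  rintro _ ⟨s, -, rfl⟩
  exact Module.End.mem_eigenspace_iff.mpr (parity_mul_Bp lam s)

end Spaces

theorem parity_basis_general (n : ℕ) (κ : ℕ) (hκeven : Even κ) (hκ : κ < n) :
    (∀ s s' : Finset (Fin (2 * n)), s.card = κ → s'.card = κ → ∀ p p' : Fin 2,
      Matrix.trace ((Bp n (p : ℕ) s)ᴴ * Bp n (p' : ℕ) s') =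
        if s = s' ∧ p = p' then 1 else 0)
    ∧ (∀ s : Finset (Fin (2 * n)), s.card = κ →
        parity n * Bp n 0 s = Bp n 0 s ∧ Bp n 0 s * parity n = Bp n 0 s ∧
        parity n * Bp n 1 s = -(Bp n 1 s) ∧ Bp n 1 s * parity n = -(Bp n 1 s))
    ∧ (Bspace n κ ⊔ Bspace n (2 * n - κ) = BparSpace n κ 0 ⊔ BparSpace n κ 1
        ∧ BparSpace n κ 0 ⊓ BparSpace n κ 1 = ⊥) := by
  refine ⟨fun s s' hs hs' p p' => trace_conjTranspose_Bp_mul_Bp p p' (by omega),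
    fun s hs => ?_, ?_, ?_⟩
  · have hs : Even s.card := hs ▸ hκeven
    simp only [parity_mul_Bp, Bp_mul_parity _ hs, pow_zero, pow_one, one_smul, neg_one_smul,
      and_self]
  · rw [Bspace_eq_span_image, Bspace_two_mul_sub_eq_span_image (by omega),
      BparSpace_eq_span_image, BparSpace_eq_span_image]
    simp only [pow_zero, one_smul, pow_one, neg_one_smul, ← sub_eq_add_neg]
    exact (Submodule.span_image_add_sup_span_image_sub two_ne_zero _ _ _).symm
  · have hdisj := Module.End.disjoint_genEigenspace (LinearMap.mulLeft ℂ (parity n))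
      (by norm_num : (-1 : ℂ) ^ 0 ≠ (-1) ^ 1) 1 1
    exact disjoint_iff.mp (hdisj.mono (BparSpace_le_eigenspace κ 0) (BparSpace_le_eigenspace κ 1))

/-- For even `κ < n`: (i) the `B_{κ,s}^p` are orthonormal; (ii) they have definite parity;
(iii) `B_κ ⊕ B_{2n−κ} = B_κ^e ⊕ B_κ^o`. -/
theorem parity_basis (n : ℕ) (hn : 1 ≤ n) (κ : ℕ) (hκeven : Even κ) (hκ : κ < n) :
    (∀ s s' : Finset (Fin (2 * n)), s.card = κ → s'.card = κ → ∀ p p' : Fin 2,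
      Matrix.trace ((Bp n (p : ℕ) s)ᴴ * Bp n (p' : ℕ) s') =
        if s = s' ∧ p = p' then 1 else 0)
    ∧ (∀ s : Finset (Fin (2 * n)), s.card = κ →
        parity n * Bp n 0 s = Bp n 0 s ∧ Bp n 0 s * parity n = Bp n 0 s ∧
        parity n * Bp n 1 s = -(Bp n 1 s) ∧ Bp n 1 s * parity n = -(Bp n 1 s))
    ∧ (Bspace n κ ⊔ Bspace n (2 * n - κ) = BparSpace n κ 0 ⊔ BparSpace n κ 1
        ∧ BparSpace n κ 0 ⊓ BparSpace n κ 1 = ⊥) :=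
  parity_basis_general n κ hκeven hκ

end
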